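/- Let ψ be a monotone error function on the vertices of a convex n-gon P and let σ > 0. Suppose (s,t) and (s',t') are diagonals of P each possessing a witness: a vertex w with s ≺ w ≺ t, ψ(w,s,t) > σ, and ψ(x,s,t) ≤ σ for every other vertex x with s ≺ x ≺ t, and likewise a vertex w' for (s',t'). If w ≠ w', then it is impossible that s ⪯ s' ≺ t' ⪯ t (the two diagonals cannot be nested). -/
import Mathlib


/-!
STATEMENT 9: Let ψ be a monotone error function on the vertices of a convex
n-gon P and let σ > 0.  Suppose (s,t) and (s',t') are diagonals of P each
possessing a witness: a vertex w with s ≺ w ≺ t, ψ(w,s,t) > σ, and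
ψ(x,s,t) ≤ σ for every other vertex x with s ≺ x ≺ t, and likewise a vertex w'
for (s',t').  If w ≠ w', then it is impossible that s ⪯ s' ≺ t' ⪯ t
(the two diagonals cannot be nested).

Vertices are indexed by `ZMod n`; the nesting condition `s ⪯ s' ≺ t' ⪯ t` is
expressed by comparing the counterclockwise distances from `s`:
`(s' - s).val < (t' - s).val ∧ (t' - s).val ≤ (t - s).val`.
-/

noncomputable section

abbrev Pt := EuclideanSpace ℝ (Fin 2)

/-- `ccw3 a b c` : the triple `(a, b, c)` is positively (counterclockwise) oriented. -/
def ccw3 (a b c : Pt) : Prop :=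
  0 < (b 0 - a 0) * (c 1 - a 1) - (b 1 - a 1) * (c 0 - a 0)

/-- `CBtw i j l` : in the counterclockwise cyclic order of `ZMod n`, a traversal
starting at `i` meets `j` strictly after `i` and strictly before `l`. -/
def CBtw {n : ℕ} (i j l : ZMod n) : Prop :=
  0 < (j - i).val ∧ (j - i).val < (l - i).val

/-- The points `v 0, v 1, …, v (n-1)` are the vertices, in counterclockwise order,
of a convex `n`-gon. -/
def ConvexCCW {n : ℕ} (v : ZMod n → Pt) : Prop :=
  ∀ i j l : ZMod n, CBtw i j l → ccw3 (v i) (v j) (v l)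

theorem no_nested_bases (n : ℕ) (v : ZMod n → Pt) (hconv : ConvexCCW v)
    (ψ : ZMod n → ZMod n → ZMod n → ℝ)
    (hψ0 : ∀ u s t : ZMod n, CBtw s u t → 0 ≤ ψ u s t)
    (hψmono : ∀ u s t s' t' : ZMod n, CBtw s u t →
      (s' - s).val < (u - s).val → (u - s).val < (t' - s).val →
      (t' - s).val ≤ (t - s).val → ψ u s' t' ≤ ψ u s t)
    (σ : ℝ) (hσ : 0 < σ)
    (s t s' t' w w' : ZMod n)
    (hw₁ : CBtw s w t) (hw₂ : σ < ψ w s t)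
    (hw₃ : ∀ x, CBtw s x t → x ≠ w → ψ x s t ≤ σ)
    (hw'₁ : CBtw s' w' t') (hw'₂ : σ < ψ w' s' t')
    (hw'₃ : ∀ x, CBtw s' x t' → x ≠ w' → ψ x s' t' ≤ σ)
    (hne : w ≠ w') :
    ¬ ((s' - s).val < (t' - s).val ∧ (t' - s).val ≤ (t - s).val) := by
  rintro ⟨h1, h2⟩
  rcases Nat.eq_zero_or_pos n with hn | hn
  · -- degenerate case n = 0 : convexity is contradictory
    subst hn
    have c1 := hconv 0 1 3 (by constructor <;> decide)
    have c2 := hconv 1 0 3 (by constructor <;> decide)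
    unfold ccw3 at c1 c2
    nlinarith [c1, c2]
  · haveI : NeZero n := ⟨hn.ne'⟩
    -- abbreviations
    have hT : (t - s).val < n := ZMod.val_lt _
    have hB : (t' - s).val < n := ZMod.val_lt _
    -- (t' - s').val = (t' - s).val - (s' - s).val
    have hsub : (t' - s').val = (t' - s).val - (s' - s).val := by
      have : t' - s' = (t' - s) - (s' - s) := by ring
      rw [this, ZMod.val_sub (le_of_lt h1)]
    -- (w' - s).val = (w' - s').val + (s' - s).val
    have hwlt : (w' - s').val + (s' - s).val < n := by
      have := hw'₁.2
      omega
    have hadd : (w' - s).val = (w' - s').val + (s' - s).val := by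
      have : w' - s = (w' - s') + (s' - s) := by ring
      rw [this, ZMod.val_add_of_lt hwlt]
    have key1 : (s' - s).val < (w' - s).val := by
      have := hw'₁.1; omega
    have key2 : (w' - s).val < (t' - s).val := by
      have := hw'₁.2; omega
    have hCB : CBtw s w' t := ⟨by omega, by omega⟩
    have h3 : ψ w' s t ≤ σ := hw₃ w' hCB (Ne.symm hne)
    have h4 : ψ w' s' t' ≤ ψ w' s t := hψmono w' s t s' t' hCB key1 key2 h2
    linarith
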